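/- arXiv:1707.07612 — 8 statements merged into one kernel-verified Lean document; each statement's English description precedes it below -/
import Mathlib

section
/- Let M > 0 and a > 0 be real numbers, and define r₁ = (2a/√3)·sinh((1/3)·arsinh(3√3·M/a)). Then r₁ > 0, 1 − 2M/r₁ + r₁²/a² = 0, and for every r > 0 one has 1 − 2M/r + r²/a² > 0 if and only if r > r₁. In particular, r₁ is the unique positive root of r ↦ 1 − 2M/r + r²/a². -/
/-!
Clearing denominators, `r a² (1 - 2M/r + r²/a²) = r³ + a² r - 2 M a²`, and `r ↦ r³ + a² r` is
strictly increasing, so for `r > 0` the sign of `1 - 2M/r + r²/a²` is the sign of `r - r₁` as soon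
as `r₁` solves the depressed cubic `r³ + a² r = 2 M a²`. That `r₁` does is the hyperbolic form of
Cardano's formula: `s = sinh (arsinh X / 3)` satisfies `4 s³ + 3 s = sinh (arsinh X) = X`.
-/

open Real

lemma strictMono_cube_add_mul {c : ℝ} (hc : 0 ≤ c) : StrictMono fun x : ℝ => x ^ 3 + c * x :=
  (Odd.strictMono_pow (by decide)).add_monotone fun _ _ h => mul_le_mul_of_nonneg_left h hc

lemma cube_add_sq_mul_of_eq_sinh_arsinh {a X x : ℝ}
    (hx : x = 2 * a / √3 * sinh (1 / 3 * arsinh X)) :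
    3 * √3 * (x ^ 3 + a ^ 2 * x) = 2 * a ^ 3 * X := by
  have hsinh : 4 * sinh (1 / 3 * arsinh X) ^ 3 + 3 * sinh (1 / 3 * arsinh X) = X := by
    rw [← sinh_three_mul, ← mul_assoc, mul_one_div_cancel three_ne_zero, one_mul, sinh_arsinh]
  have h3 : √3 ^ 2 = 3 := sq_sqrt zero_le_three
  subst hx
  generalize sinh (1 / 3 * arsinh X) = s at hsinh
  field_simp
  linear_combination 3 * a ^ 3 * hsinh + a ^ 3 * (3 * s - X) * h3

lemma one_sub_div_add_sq_div_eq {M a r : ℝ} (hr : r ≠ 0) (ha : a ≠ 0) :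
    1 - 2 * M / r + r ^ 2 / a ^ 2 = (r ^ 3 + a ^ 2 * r - 2 * M * a ^ 2) / (r * a ^ 2) := by
  field_simp
  ring

/-- The unique positive root `r₁` of `r ↦ 1 - 2M/r + r²/a²` (the allowed
region of the open K = -1 McVittie spacetime), given by the hyperbolic solution formula. -/
theorem mcvittie_open_allowed_region (M a : ℝ) (hM : 0 < M) (ha : 0 < a)
    (r₁ : ℝ)
    (hr₁ : r₁ = (2 * a / Real.sqrt 3) *
      Real.sinh ((1 / 3) * Real.arsinh (3 * Real.sqrt 3 * M / a))) :
    0 < r₁ ∧ 1 - 2 * M / r₁ + r₁ ^ 2 / a ^ 2 = 0 ∧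
    (∀ r : ℝ, 0 < r → (0 < 1 - 2 * M / r + r ^ 2 / a ^ 2 ↔ r₁ < r)) ∧
    (∀ r : ℝ, 0 < r → 1 - 2 * M / r + r ^ 2 / a ^ 2 = 0 → r = r₁) := by
  have hr₁pos : 0 < r₁ := by
    have : 0 < arsinh (3 * √3 * M / a) := arsinh_pos_iff.mpr (by positivity)
    rw [hr₁]; positivity
  set f : ℝ → ℝ := fun x => x ^ 3 + a ^ 2 * x
  have hf : StrictMono f := strictMono_cube_add_mul (sq_nonneg a)
  have hfr₁ : f r₁ = 2 * M * a ^ 2 := by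
    have h := cube_add_sq_mul_of_eq_sinh_arsinh hr₁
    field_simp at h
    linear_combination h
  have hκ : ∀ r, 0 < r → 1 - 2 * M / r + r ^ 2 / a ^ 2 = (f r - f r₁) / (r * a ^ 2) := by
    intro r hr
    rw [hfr₁, one_sub_div_add_sq_div_eq hr.ne' ha.ne']
  refine ⟨hr₁pos, by simp [hκ r₁ hr₁pos], fun r hr => ?_, fun r hr h => ?_⟩
  · rw [hκ r hr, div_pos_iff_of_pos_right (by positivity), sub_pos, hf.lt_iff_lt]
  · rw [hκ r hr, div_eq_zero_iff, sub_eq_zero] at h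
    exact hf.injective (h.resolve_right (by positivity))
end

section
/- Let M > 0 and a > 3√3·M be real numbers. Define ρ₀ = (1/3)·(π − arccos(3√3·M/a)), r₁ = (2a/√3)·cos(ρ₀ − 2π/3) and r₂ = (2a/√3)·cos(ρ₀). Then ρ₀ ∈ (π/6, π/3), r₁ ∈ (0, a/√3), r₂ ∈ (a/√3, a), and for every r > 0 one has 1 − 2M/r − r²/a² > 0 if and only if r₁ < r < r₂. -/
/-!
Clearing denominators, `1 - 2M/r - r²/a² > 0` for `r > 0` says that the depressed cubic
`r³ - a²r + 2Ma²` is negative. Substituting `r = (2a/√3) cos θ` and using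
`cos 3θ = 4cos³θ - 3cos θ` turns the cubic into a multiple of `cos 3θ + 3√3M/a`, so `r₁` and `r₂`
are roots; `a > 3√3M` puts `ρ₀` in `(π/6, π/3)`, which separates them. With two distinct roots
`r₁ < r₂` the cubic factors as `(r - r₁)(r - r₂)(r + r₁ + r₂)`, and the last factor is positive.
-/

open Real Set

theorem two_mul_cos_pow_three_sub (k θ : ℝ) :
    (2 * k * cos θ) ^ 3 - 3 * k ^ 2 * (2 * k * cos θ) = 2 * k ^ 3 * cos (3 * θ) := by
  rw [cos_three_mul]
  ring

theorem cubic_root_of_cos_three_mul {M a θ : ℝ} (ha : a ≠ 0)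
    (hθ : cos (3 * θ) = -(3 * √3 * M / a)) :
    (2 * a / √3 * cos θ) ^ 3 - a ^ 2 * (2 * a / √3 * cos θ) + 2 * M * a ^ 2 = 0 := by
  have h3 : √3 ^ 2 = 3 := sq_sqrt (by norm_num)
  have hsq : 3 * (a / √3) ^ 2 = a ^ 2 := by
    field_simp
    rw [h3]
  have hcube : 2 * (a / √3) ^ 3 * (3 * √3 * M / a) = 2 * M * a ^ 2 := by
    field_simp
    rw [h3]
  rw [mul_div_assoc]
  linear_combination two_mul_cos_pow_three_sub (a / √3) θ + 2 * (a / √3) ^ 3 * hθ +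
    2 * (a / √3) * cos θ * hsq - hcube

theorem cubic_eq_mul_of_two_roots {R : Type*} [CommRing R] [IsDomain R] {p q r₁ r₂ : R}
    (h₁ : r₁ ^ 3 - p * r₁ + q = 0) (h₂ : r₂ ^ 3 - p * r₂ + q = 0) (hne : r₁ ≠ r₂) (x : R) :
    x ^ 3 - p * x + q = (x - r₁) * (x - r₂) * (x + r₁ + r₂) := by
  have hp : r₁ ^ 2 + r₁ * r₂ + r₂ ^ 2 = p :=
    mul_left_cancel₀ (sub_ne_zero.2 hne) (by linear_combination h₁ - h₂)
  linear_combination (x - r₁) * hp + h₁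

theorem one_sub_div_sub_div_pos_iff {M a r : ℝ} (ha : a ≠ 0) (hr : 0 < r) :
    0 < 1 - 2 * M / r - r ^ 2 / a ^ 2 ↔ r ^ 3 - a ^ 2 * r + 2 * M * a ^ 2 < 0 := by
  have h : 1 - 2 * M / r - r ^ 2 / a ^ 2 = -(r ^ 3 - a ^ 2 * r + 2 * M * a ^ 2) / (r * a ^ 2) := by
    field_simp
    ring
  rw [h, div_pos_iff_of_pos_right (by positivity), neg_pos]

theorem one_third_mul_pi_sub_arccos_mem_Ioo {c : ℝ} (h₀ : 0 < c) (h₁ : c < 1) :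
    1 / 3 * (π - arccos c) ∈ Ioo (π / 6) (π / 3) := by
  have hlo := arccos_pos.2 h₁
  have hhi := arccos_lt_pi_div_two.2 h₀
  constructor <;> linarith

theorem mul_cos_mem_Ioo {a ρ : ℝ} (ha : 0 < a) (hρ : ρ ∈ Ioo (π / 6) (π / 3)) :
    2 * a / √3 * cos ρ ∈ Ioo (a / √3) a := by
  obtain ⟨hρ₁, hρ₂⟩ := hρ
  have hpi := pi_pos
  have hk : 0 < 2 * a / √3 := by positivity
  have hlo : cos (π / 3) < cos ρ :=
    strictAntiOn_cos ⟨by linarith, by linarith⟩ ⟨by positivity, by linarith⟩ hρ₂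
  have hhi : cos ρ < cos (π / 6) :=
    strictAntiOn_cos ⟨by positivity, by linarith⟩ ⟨by linarith, by linarith⟩ hρ₁
  rw [cos_pi_div_three] at hlo
  rw [cos_pi_div_six] at hhi
  constructor
  · calc a / √3 = 2 * a / √3 * (1 / 2) := by ring
      _ < 2 * a / √3 * cos ρ := mul_lt_mul_of_pos_left hlo hk
  · calc 2 * a / √3 * cos ρ < 2 * a / √3 * (√3 / 2) := mul_lt_mul_of_pos_left hhi hk
      _ = a := by field_simp

theorem mul_cos_sub_two_pi_div_three_mem_Ioo {a ρ : ℝ} (ha : 0 < a)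
    (hρ : ρ ∈ Ioo (π / 6) (π / 3)) : 2 * a / √3 * cos (ρ - 2 * π / 3) ∈ Ioo 0 (a / √3) := by
  obtain ⟨hρ₁, hρ₂⟩ := hρ
  have hpi := pi_pos
  have hk : 0 < 2 * a / √3 := by positivity
  rw [← cos_neg, neg_sub]
  have hpos : 0 < cos (2 * π / 3 - ρ) := cos_pos_of_mem_Ioo ⟨by linarith, by linarith⟩
  have hhi : cos (2 * π / 3 - ρ) < cos (π / 3) :=
    strictAntiOn_cos ⟨by positivity, by linarith⟩ ⟨by linarith, by linarith⟩ (by linarith)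
  rw [cos_pi_div_three] at hhi
  refine ⟨mul_pos hk hpos, ?_⟩
  calc 2 * a / √3 * cos (2 * π / 3 - ρ) < 2 * a / √3 * (1 / 2) := mul_lt_mul_of_pos_left hhi hk
    _ = a / √3 := by ring

/-- For the closed (K = +1) McVittie spacetime with `a > 3√3·M`, the allowed
region `1 - 2M/r - r²/a² > 0` is exactly the interval `(r₁, r₂)` given by the
trigonometric solution formula for the two positive roots of the associated cubic. -/
theorem mcvittie_closed_allowed_region (M a : ℝ) (hM : 0 < M)
    (ha : 3 * Real.sqrt 3 * M < a)
    (ρ₀ r₁ r₂ : ℝ)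
    (hρ₀ : ρ₀ = (1 / 3) * (Real.pi - Real.arccos (3 * Real.sqrt 3 * M / a)))
    (hr₁ : r₁ = (2 * a / Real.sqrt 3) * Real.cos (ρ₀ - 2 * Real.pi / 3))
    (hr₂ : r₂ = (2 * a / Real.sqrt 3) * Real.cos ρ₀) :
    ρ₀ ∈ Set.Ioo (Real.pi / 6) (Real.pi / 3) ∧
    r₁ ∈ Set.Ioo 0 (a / Real.sqrt 3) ∧
    r₂ ∈ Set.Ioo (a / Real.sqrt 3) a ∧
    ∀ r : ℝ, 0 < r → (0 < 1 - 2 * M / r - r ^ 2 / a ^ 2 ↔ r₁ < r ∧ r < r₂) := by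
  have ha₀ : 0 < a := lt_trans (by positivity) ha
  have hc : 3 * √3 * M / a ∈ Ioo 0 1 := ⟨by positivity, (div_lt_one ha₀).2 ha⟩
  have hρ : ρ₀ ∈ Ioo (π / 6) (π / 3) := hρ₀ ▸ one_third_mul_pi_sub_arccos_mem_Ioo hc.1 hc.2
  have h₂ : cos (3 * ρ₀) = -(3 * √3 * M / a) := by
    rw [hρ₀, show ∀ x : ℝ, 3 * (1 / 3 * x) = x by intro; ring, cos_pi_sub,
      cos_arccos (by linarith [hc.1]) hc.2.le]
  have h₁ : cos (3 * (ρ₀ - 2 * π / 3)) = -(3 * √3 * M / a) := by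
    rw [show 3 * (ρ₀ - 2 * π / 3) = 3 * ρ₀ - 2 * π by ring, cos_sub_two_pi, h₂]
  have hr₁mem : r₁ ∈ Ioo 0 (a / √3) := hr₁ ▸ mul_cos_sub_two_pi_div_three_mem_Ioo ha₀ hρ
  have hr₂mem : r₂ ∈ Ioo (a / √3) a := hr₂ ▸ mul_cos_mem_Ioo ha₀ hρ
  have hr₁₂ : r₁ < r₂ := hr₁mem.2.trans hr₂mem.1
  refine ⟨hρ, hr₁mem, hr₂mem, fun r hr => ?_⟩
  have hfac := cubic_eq_mul_of_two_roots (hr₁ ▸ cubic_root_of_cos_three_mul ha₀.ne' h₁)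
    (hr₂ ▸ cubic_root_of_cos_three_mul ha₀.ne' h₂) hr₁₂.ne r
  have hsum : 0 < r + r₁ + r₂ := by linarith [hr₁mem.1]
  rw [one_sub_div_sub_div_pos_iff ha₀.ne' hr, hfac, ← sub_mul_sub_neg_iff r hr₁₂.le]
  exact ⟨(neg_of_mul_neg_left · hsum.le), (mul_neg_of_neg_of_pos · hsum)⟩
end

section
/- Let Λ ≥ 0 and let a : (0, ∞) → (0, ∞) be differentiable with H := a′/a differentiable, such that for all t > 0: H(t) > 0, H′(t) + a(t)⁻² < 0, and H(t)² − a(t)⁻² > Λ/3. Then a(t) → +∞ as t → +∞, and there exists H₀ ≥ 0 such that H(t) → H₀ as t → +∞. -/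
/-- In an eternally expanding `K = -1` FLRW background with `Λ ≥ 0`
satisfying the dominant energy condition (`H' + a⁻² < 0` and `H² - a⁻² > Λ/3`),
the scale factor tends to infinity and the Hubble function tends to a limit `H₀ ≥ 0`. -/
theorem hubble_limit_eternal_expansion (Λ : ℝ) (hΛ : 0 ≤ Λ)
    (a a' H H' : ℝ → ℝ)
    (ha_pos : ∀ t : ℝ, 0 < t → 0 < a t)
    (ha' : ∀ t : ℝ, 0 < t → HasDerivAt a (a' t) t)
    (hH : ∀ t : ℝ, 0 < t → H t = a' t / a t)
    (hH' : ∀ t : ℝ, 0 < t → HasDerivAt H (H' t) t)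
    (hHpos : ∀ t : ℝ, 0 < t → 0 < H t)
    (hdec : ∀ t : ℝ, 0 < t → H' t + ((a t) ^ 2)⁻¹ < 0)
    (hdec' : ∀ t : ℝ, 0 < t → Λ / 3 < (H t) ^ 2 - ((a t) ^ 2)⁻¹) :
    Filter.Tendsto a Filter.atTop Filter.atTop ∧
    ∃ H₀ : ℝ, 0 ≤ H₀ ∧ Filter.Tendsto H Filter.atTop (nhds H₀) := by
  -- basic fact: a' t > 1 for t > 0
  have ha'gt : ∀ t : ℝ, 0 < t → 1 < a' t := by
    intro t ht
    have hap := ha_pos t ht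
    have hHt : (a t)⁻¹ < H t := by
      have h1 : ((a t)⁻¹) ^ 2 < (H t) ^ 2 := by
        have := hdec' t ht
        have : ((a t) ^ 2)⁻¹ < (H t) ^ 2 := by nlinarith
        simpa [inv_pow] using this
      exact lt_of_pow_lt_pow_left₀ 2 (hHpos t ht).le h1
    have : a' t = H t * a t := by
      rw [hH t ht]; field_simp
    rw [this]
    calc (1 : ℝ) = (a t)⁻¹ * a t := by field_simp
    _ < H t * a t := by exact mul_lt_mul_of_pos_right hHt hap
  -- a is strictly above t + (a 1 - 1) on Ici 1
  have hmono : StrictMonoOn (fun t => a t - t) (Set.Ici 1) := by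
    apply strictMonoOn_of_deriv_pos (convex_Ici 1)
    · intro x hx
      have hx0 : (0:ℝ) < x := lt_of_lt_of_le one_pos hx
      exact ((ha' x hx0).sub (hasDerivAt_id x)).continuousAt.continuousWithinAt
    · intro x hx
      rw [interior_Ici] at hx
      have hx0 : (0:ℝ) < x := lt_trans one_pos hx
      have : HasDerivAt (fun t => a t - t) (a' x - 1) x :=
        (ha' x hx0).sub (hasDerivAt_id x)
      rw [this.deriv]
      linarith [ha'gt x hx0]
  have hatend : Filter.Tendsto a Filter.atTop Filter.atTop := by
    have hlow : ∀ᶠ t in Filter.atTop, t + (a 1 - 1) ≤ a t := by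
      filter_upwards [Filter.eventually_ge_atTop (1:ℝ)] with t ht
      have := (hmono.monotoneOn) Set.self_mem_Ici ht ht
      simp only at this
      linarith
    have hid : Filter.Tendsto (fun t : ℝ => t + (a 1 - 1)) Filter.atTop Filter.atTop :=
      Filter.tendsto_atTop_add_const_right _ _ Filter.tendsto_id
    exact Filter.tendsto_atTop_mono' _ hlow hid
  refine ⟨hatend, ?_⟩
  -- H is antitone on Ici 1
  have hanti : StrictAntiOn H (Set.Ici 1) := by
    apply strictAntiOn_of_deriv_neg (convex_Ici 1)
    · intro x hx
      have hx0 : (0:ℝ) < x := lt_of_lt_of_le one_pos hx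
      exact (hH' x hx0).continuousAt.continuousWithinAt
    · intro x hx
      rw [interior_Ici] at hx
      have hx0 : (0:ℝ) < x := lt_trans one_pos hx
      rw [(hH' x hx0).deriv]
      have h2 := hdec x hx0
      have : (0:ℝ) < ((a x) ^ 2)⁻¹ :=
        inv_pos.2 (pow_pos (ha_pos x hx0) 2)
      linarith
  set G : ℝ → ℝ := fun t => H (max t 1) with hG
  have hGanti : Antitone G := by
    intro s t hst
    rcases eq_or_lt_of_le (max_le_max hst (le_refl (1:ℝ))) with h | h
    · simp [hG, h]
    · exact (hanti (le_max_right s 1) (le_max_right t 1) h).le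
  have hGpos : ∀ t, 0 < G t := fun t =>
    hHpos _ (lt_of_lt_of_le one_pos (le_max_right t 1))
  have hGbdd : BddBelow (Set.range G) :=
    ⟨0, fun x ⟨t, ht⟩ => ht ▸ (hGpos t).le⟩
  have hGtend : Filter.Tendsto G Filter.atTop (nhds (⨅ t, G t)) :=
    tendsto_atTop_ciInf hGanti hGbdd
  refine ⟨⨅ t, G t, le_ciInf fun t => (hGpos t).le, ?_⟩
  apply hGtend.congr'
  filter_upwards [Filter.eventually_ge_atTop 1] with t ht
  simp [hG, max_eq_left ht]
end

section
/- Let M > 0, a > 0 and r > 2M be real numbers. Then a³/√(a² + r²) < ∫_r^∞ s·(1 − 2M/s + s²/a²)^(−3/2) ds < a³/r. -/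
/-!
Since `2M < r < s` and `M > 0`, the allowed-region function satisfies
`s²/a² < κ(s) < 1 + s²/a²` on `(r, ∞)`, so the integrand is squeezed strictly between
`s (1 + s²/a²)^(-3/2)` and `s (s²/a²)^(-3/2) = a³ s⁻²`. Both bounds integrate in closed
form: `-a² (1 + s²/a²)^(-1/2)` is an antiderivative of the first, giving `a³/√(a² + r²)`, and
the second gives `a³/r`.
-/

open MeasureTheory Set Filter Topology

theorem setIntegral_lt_setIntegral_of_forall_lt {X : Type*} [MeasurableSpace X] {μ : Measure X}
    {s : Set X} {f g : X → ℝ} (hs : MeasurableSet s) (hμs : μ s ≠ 0)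
    (hf : IntegrableOn f s μ) (hg : IntegrableOn g s μ) (hfg : ∀ x ∈ s, f x < g x) :
    ∫ x in s, f x ∂μ < ∫ x in s, g x ∂μ := by
  have hpos : 0 < ∫ x in s, (g x - f x) ∂μ := by
    refine (setIntegral_pos_iff_support_of_nonneg_ae ?_ (hg.sub hf)).mpr ?_
    · filter_upwards [ae_restrict_mem hs] with x hx
      exact sub_nonneg.mpr (hfg x hx).le
    · have hsupp : s ⊆ Function.support (fun x => g x - f x) ∩ s :=
        fun x hx => ⟨(sub_pos.mpr (hfg x hx)).ne', hx⟩
      exact (pos_iff_ne_zero.mpr hμs).trans_le (measure_mono hsupp)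
  rw [integral_sub hg hf] at hpos
  linarith

namespace McVittie

variable {a : ℝ}

theorem hasDerivAt_neg_sq_mul_one_add_sq_div_sq_rpow (ha : a ≠ 0) (x : ℝ) :
    HasDerivAt (fun s : ℝ => -a ^ 2 * (1 + s ^ 2 / a ^ 2) ^ (-(1 : ℝ) / 2))
      (x * (1 + x ^ 2 / a ^ 2) ^ (-(3 : ℝ) / 2)) x := by
  have hbase : 0 < 1 + x ^ 2 / a ^ 2 := by positivity
  have hinner : HasDerivAt (fun s : ℝ => 1 + s ^ 2 / a ^ 2) (2 * x / a ^ 2) x := by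
    simpa using ((hasDerivAt_pow 2 x).div_const (a ^ 2)).const_add 1
  have h := (hinner.rpow_const (p := -(1 : ℝ) / 2) (Or.inl hbase.ne')).const_mul (-a ^ 2)
  refine h.congr_deriv ?_
  rw [show -(1 : ℝ) / 2 - 1 = -(3 : ℝ) / 2 by norm_num]
  field_simp

theorem tendsto_neg_sq_mul_one_add_sq_div_sq_rpow_atTop (ha : a ≠ 0) :
    Tendsto (fun s : ℝ => -a ^ 2 * (1 + s ^ 2 / a ^ 2) ^ (-(1 : ℝ) / 2)) atTop (𝓝 0) := by
  have hbase : Tendsto (fun s : ℝ => 1 + s ^ 2 / a ^ 2) atTop atTop := by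
    refine tendsto_atTop_add_const_left _ _ ?_
    exact (tendsto_pow_atTop two_ne_zero).atTop_div_const (by positivity)
  have hrpow : Tendsto (fun y : ℝ => y ^ (-(1 : ℝ) / 2)) atTop (𝓝 0) := by
    simpa [neg_div] using tendsto_rpow_neg_atTop (y := 1 / 2) (by norm_num)
  simpa using (hrpow.comp hbase).const_mul (-a ^ 2)

theorem integrableOn_Ioi_mul_one_add_sq_div_sq_rpow (ha : a ≠ 0) {r : ℝ} (hr : 0 ≤ r) :
    IntegrableOn (fun s : ℝ => s * (1 + s ^ 2 / a ^ 2) ^ (-(3 : ℝ) / 2)) (Ioi r) :=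
  integrableOn_Ioi_deriv_of_nonneg' (fun x _ => hasDerivAt_neg_sq_mul_one_add_sq_div_sq_rpow ha x)
    (fun x hx => mul_nonneg (hr.trans hx.le) (Real.rpow_nonneg (by positivity) _))
    (tendsto_neg_sq_mul_one_add_sq_div_sq_rpow_atTop ha)

theorem sq_mul_one_add_sq_div_sq_rpow_neg_half (ha : 0 < a) (r : ℝ) :
    a ^ 2 * (1 + r ^ 2 / a ^ 2) ^ (-(1 : ℝ) / 2) = a ^ 3 / √(a ^ 2 + r ^ 2) := by
  have hbase : 1 + r ^ 2 / a ^ 2 = (a ^ 2 + r ^ 2) / a ^ 2 := by field_simp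
  rw [hbase, neg_div, Real.rpow_neg (by positivity), ← Real.sqrt_eq_rpow,
    Real.sqrt_div' _ (by positivity), Real.sqrt_sq ha.le]
  have : 0 < √(a ^ 2 + r ^ 2) := by positivity
  field_simp

theorem integral_Ioi_mul_one_add_sq_div_sq_rpow (ha : 0 < a) {r : ℝ} (hr : 0 ≤ r) :
    ∫ s in Ioi r, s * (1 + s ^ 2 / a ^ 2) ^ (-(3 : ℝ) / 2) = a ^ 3 / √(a ^ 2 + r ^ 2) := by
  rw [integral_Ioi_of_hasDerivAt_of_tendsto'
    (fun x _ => hasDerivAt_neg_sq_mul_one_add_sq_div_sq_rpow ha.ne' x)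
    (integrableOn_Ioi_mul_one_add_sq_div_sq_rpow ha.ne' hr)
    (tendsto_neg_sq_mul_one_add_sq_div_sq_rpow_atTop ha.ne'),
    zero_sub, neg_mul, neg_neg, sq_mul_one_add_sq_div_sq_rpow_neg_half ha]

theorem mul_sq_div_sq_rpow (ha : 0 < a) {s : ℝ} (hs : 0 < s) :
    s * (s ^ 2 / a ^ 2) ^ (-(3 : ℝ) / 2) = a ^ 3 * s ^ (-2 : ℝ) := by
  rw [← div_pow, ← Real.rpow_natCast_mul (div_pos hs ha).le,
    show ((2 : ℕ) : ℝ) * (-(3 : ℝ) / 2) = ((-3 : ℤ) : ℝ) by norm_num,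
    show (-2 : ℝ) = ((-2 : ℤ) : ℝ) by norm_num, Real.rpow_intCast, Real.rpow_intCast]
  field_simp

theorem integrableOn_Ioi_mul_sq_div_sq_rpow (ha : 0 < a) {r : ℝ} (hr : 0 < r) :
    IntegrableOn (fun s : ℝ => s * (s ^ 2 / a ^ 2) ^ (-(3 : ℝ) / 2)) (Ioi r) :=
  IntegrableOn.congr_fun
    ((integrableOn_Ioi_rpow_of_lt (a := -2) (by norm_num) hr).const_mul (a ^ 3))
    (fun s hs => (mul_sq_div_sq_rpow ha (hr.trans hs)).symm) measurableSet_Ioi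

theorem integral_Ioi_mul_sq_div_sq_rpow (ha : 0 < a) {r : ℝ} (hr : 0 < r) :
    ∫ s in Ioi r, s * (s ^ 2 / a ^ 2) ^ (-(3 : ℝ) / 2) = a ^ 3 / r := by
  rw [setIntegral_congr_fun measurableSet_Ioi fun s hs => mul_sq_div_sq_rpow ha (hr.trans hs),
    integral_const_mul, integral_Ioi_rpow_of_lt (by norm_num) hr]
  norm_num [Real.rpow_neg_one, div_eq_mul_inv]

noncomputable def kappa (M a s : ℝ) : ℝ := 1 - 2 * M / s + s ^ 2 / a ^ 2

variable {M s : ℝ}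

theorem kappa_mem_Ioo (hM : 0 < M) (hs : 2 * M < s) :
    kappa M a s ∈ Ioo (s ^ 2 / a ^ 2) (1 + s ^ 2 / a ^ 2) := by
  have hs₀ : 0 < s := by linarith
  have hlt : 2 * M / s < 1 := (div_lt_one hs₀).mpr hs
  have hpos : 0 < 2 * M / s := by positivity
  constructor <;> (unfold kappa; linarith)

theorem mul_kappa_rpow_mem_Ioo (hM : 0 < M) (ha : a ≠ 0) (hs : 2 * M < s) :
    s * kappa M a s ^ (-(3 : ℝ) / 2) ∈
      Ioo (s * (1 + s ^ 2 / a ^ 2) ^ (-(3 : ℝ) / 2))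
        (s * (s ^ 2 / a ^ 2) ^ (-(3 : ℝ) / 2)) := by
  have hs₀ : 0 < s := by linarith
  have hsq : 0 < s ^ 2 / a ^ 2 := by positivity
  obtain ⟨hlower, hupper⟩ := kappa_mem_Ioo (a := a) hM hs
  exact ⟨mul_lt_mul_of_pos_left
      (Real.rpow_lt_rpow_of_neg (hsq.trans hlower) hupper (by norm_num)) hs₀,
    mul_lt_mul_of_pos_left (Real.rpow_lt_rpow_of_neg hsq hlower (by norm_num)) hs₀⟩

end McVittie

open McVittie in
/-- Bounds for the integral `∫_r^∞ s·κ(s)^(-3/2) ds` where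
`κ(s) = 1 - 2M/s + s²/a²` is the allowed-region function of the open (K = -1)
McVittie spacetime, for `r > 2M`. -/
theorem mcvittie_integral_bounds (M a r : ℝ) (hM : 0 < M) (ha : 0 < a) (hr : 2 * M < r) :
    a ^ 3 / Real.sqrt (a ^ 2 + r ^ 2) <
      (∫ s in Set.Ioi r, s * (1 - 2 * M / s + s ^ 2 / a ^ 2) ^ (-(3 : ℝ) / 2)) ∧
    (∫ s in Set.Ioi r, s * (1 - 2 * M / s + s ^ 2 / a ^ 2) ^ (-(3 : ℝ) / 2)) < a ^ 3 / r := by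
  have hr₀ : 0 < r := by linarith
  have hbounds (s : ℝ) (hs : s ∈ Ioi r) := mul_kappa_rpow_mem_Ioo hM ha.ne' (hr.trans hs)
  have hl := integrableOn_Ioi_mul_one_add_sq_div_sq_rpow ha.ne' hr₀.le
  have hu := integrableOn_Ioi_mul_sq_div_sq_rpow ha hr₀
  have hf : IntegrableOn (fun s => s * kappa M a s ^ (-(3 : ℝ) / 2)) (Ioi r) :=
    integrable_of_le_of_le (by unfold kappa; fun_prop)
      ((ae_restrict_mem measurableSet_Ioi).mono fun s hs => (hbounds s hs).1.le)
      ((ae_restrict_mem measurableSet_Ioi).mono fun s hs => (hbounds s hs).2.le) hl hu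
  have hvol : volume (Ioi r) ≠ 0 := by simp
  constructor
  · rw [← integral_Ioi_mul_one_add_sq_div_sq_rpow ha hr₀.le]
    exact setIntegral_lt_setIntegral_of_forall_lt measurableSet_Ioi hvol hl hf
      fun s hs => (hbounds s hs).1
  · rw [← integral_Ioi_mul_sq_div_sq_rpow ha hr₀]
    exact setIntegral_lt_setIntegral_of_forall_lt measurableSet_Ioi hvol hf hu
      fun s hs => (hbounds s hs).2
end

section
/- Let a > 0 and 0 < r < a be fixed real numbers. Then lim_{M → 0⁺} ∫_{3M}^r s·(1 − 2M/s − s²/a²)^(−3/2) ds = ∫_0^r s·(1 − s²/a²)^(−3/2) ds. -/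
open MeasureTheory Set Filter Topology

/-!
On `(3M, r]` the function `κ_M(s) = 1 - 2M/s - s²/a²` is bounded below by a positive
constant, uniformly in small `M > 0`: for `s ≤ a/3` one has `2M/s < 2/3` and `s²/a² ≤ 1/9`, and
for `s > a/3` one has `2M/s < 6M/a` and `s²/a² ≤ r²/a² < 1`. So the integrands are bounded by a
constant, and dominated convergence applies once the moving lower limit `3M → 0` is absorbed
into an indicator.
-/

namespace intervalIntegral

variable {E : Type*} [NormedAddCommGroup E] [NormedSpace ℝ E] {μ : Measure ℝ}

theorem integral_indicator_Ioc {f : ℝ → E} {a b c : ℝ} (hac : a ≤ c) (hcb : c ≤ b) :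
    ∫ x in a..b, (Ioc c b).indicator f x ∂μ = ∫ x in c..b, f x ∂μ := by
  rw [integral_of_le (hac.trans hcb), integral_of_le hcb, setIntegral_indicator measurableSet_Ioc,
    Ioc_inter_Ioc, max_eq_right hac, min_self]

theorem tendsto_integral_of_dominated_of_tendsto_lowerLimit {ι : Type*} {L : Filter ι}
    [L.IsCountablyGenerated] {F : ι → ℝ → E} {f : ℝ → E} {lo : ι → ℝ} {a b : ℝ} (g : ℝ → ℝ)
    (hab : a < b) (hlo : Tendsto lo L (𝓝[≥] a))
    (hF_meas : ∀ᶠ i in L, AEStronglyMeasurable (F i) (μ.restrict (Ioc (lo i) b)))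
    (h_bound : ∀ᶠ i in L, ∀ x ∈ Ioc (lo i) b, ‖F i x‖ ≤ g x)
    (hg : IntervalIntegrable g μ a b)
    (h_lim : ∀ᵐ x ∂μ, x ∈ Ioc a b → Tendsto (fun i => F i x) L (𝓝 (f x))) :
    Tendsto (fun i => ∫ x in lo i..b, F i x ∂μ) L (𝓝 (∫ x in a..b, f x ∂μ)) := by
  have hlo_mem : ∀ᶠ i in L, lo i ∈ Ico a b := hlo (Ico_mem_nhdsGE hab)
  have h_eq : ∀ᶠ i in L, ∫ x in a..b, (Ioc (lo i) b).indicator (F i) x ∂μ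
      = ∫ x in lo i..b, F i x ∂μ := by
    filter_upwards [hlo_mem] with i hi using integral_indicator_Ioc hi.1 hi.2.le
  refine (tendsto_integral_filter_of_dominated_convergence (fun x => ‖g x‖) ?_ ?_ hg.norm ?_).congr'
    h_eq
  · filter_upwards [hF_meas] with i hi
    exact ((aestronglyMeasurable_indicator_iff measurableSet_Ioc).2 hi).restrict
  · filter_upwards [h_bound] with i hi
    refine Eventually.of_forall fun x _ => ?_
    by_cases hx : x ∈ Ioc (lo i) b
    · rw [indicator_of_mem hx]
      exact (hi x hx).trans (Real.le_norm_self _)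
    · rw [indicator_of_notMem hx, norm_zero]
      exact norm_nonneg _
  · filter_upwards [h_lim] with x hx hxab
    rw [uIoc_of_le hab.le] at hxab
    refine (hx hxab).congr' ?_
    filter_upwards [hlo (Ico_mem_nhdsGE hxab.1)] with i hi
    exact (indicator_of_mem (show x ∈ Ioc (lo i) b from ⟨hi.2, hxab.2⟩) (F i)).symm

end intervalIntegral

theorem norm_mul_rpow_le {s r κ c p : ℝ} (hs : 0 ≤ s) (hsr : s ≤ r) (hc : 0 < c)
    (hcκ : c ≤ κ) (hp : p ≤ 0) : ‖s * κ ^ p‖ ≤ r * c ^ p := by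
  have hκp : 0 ≤ κ ^ p := Real.rpow_nonneg (hc.le.trans hcκ) p
  rw [Real.norm_eq_abs, abs_of_nonneg (mul_nonneg hs hκp)]
  exact mul_le_mul hsr (Real.rpow_le_rpow_of_nonpos hc hcκ hp) hκp (hs.trans hsr)

theorem sq_div_sq_lt_one {s a : ℝ} (hs : 0 ≤ s) (hsa : s < a) : s ^ 2 / a ^ 2 < 1 :=
  (div_lt_one (pow_pos (hs.trans_lt hsa) 2)).2 (pow_lt_pow_left₀ hsa hs two_ne_zero)

noncomputable def closedMcVittieKappa (a M s : ℝ) : ℝ := 1 - 2 * M / s - s ^ 2 / a ^ 2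

theorem min_le_closedMcVittieKappa {a M r s : ℝ} (ha : 0 < a) (hM : 0 < M)
    (hs : s ∈ Ioc (3 * M) r) :
    min (2 / 9) (1 - r ^ 2 / a ^ 2 - 6 * M / a) ≤ closedMcVittieKappa a M s := by
  obtain ⟨hMs, hsr⟩ := hs
  have hs0 : 0 < s := by linarith
  unfold closedMcVittieKappa
  rcases le_or_gt s (a / 3) with hsa | hsa
  · have hMs' : 2 * M / s ≤ 2 / 3 := by rw [div_le_iff₀ hs0]; linarith
    have hsa' : s ^ 2 / a ^ 2 ≤ 1 / 9 := by rw [div_le_iff₀ (by positivity)]; nlinarith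
    exact (min_le_left _ _).trans (by linarith)
  · have hMs' : 2 * M / s ≤ 6 * M / a := by
      rw [div_le_div_iff₀ hs0 ha]; nlinarith
    have hsr' : s ^ 2 / a ^ 2 ≤ r ^ 2 / a ^ 2 := by gcongr
    exact (min_le_right _ _).trans (by linarith)

theorem eventually_le_closedMcVittieKappa {a r : ℝ} (hr0 : 0 < r) (hra : r < a) :
    ∃ c > 0, ∀ᶠ M in 𝓝[>] 0, ∀ s ∈ Ioc (3 * M) r, c ≤ closedMcVittieKappa a M s := by
  have ha : 0 < a := hr0.trans hra
  set ε := 1 - r ^ 2 / a ^ 2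
  have hε : 0 < ε := sub_pos.2 (sq_div_sq_lt_one hr0.le hra)
  refine ⟨min (2 / 9) (ε / 2), lt_min (by norm_num) (half_pos hε), ?_⟩
  have hsmall : ∀ᶠ M in 𝓝[>] (0 : ℝ), M < ε * a / 12 :=
    nhdsWithin_le_nhds (gt_mem_nhds (by positivity))
  filter_upwards [self_mem_nhdsWithin, hsmall] with M hM hMε s hs
  refine le_trans ?_ (min_le_closedMcVittieKappa ha hM hs)
  have : 6 * M / a < ε / 2 := by rw [div_lt_iff₀ ha]; linarith
  exact min_le_min_left _ (by linarith)

theorem tendsto_closedMcVittieKappa_rpow {a s : ℝ} (p : ℝ) (hs : 0 ≤ s) (hsa : s < a) :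
    Tendsto (fun M => closedMcVittieKappa a M s ^ p) (𝓝 0) (𝓝 ((1 - s ^ 2 / a ^ 2) ^ p)) := by
  have hκ0 : closedMcVittieKappa a 0 s = 1 - s ^ 2 / a ^ 2 := by simp [closedMcVittieKappa]
  have hκ : Continuous fun M => closedMcVittieKappa a M s := by
    unfold closedMcVittieKappa; fun_prop
  rw [← hκ0]
  exact (hκ.tendsto 0).rpow_const (Or.inl (hκ0 ▸ (sub_pos.2 (sq_div_sq_lt_one hs hsa)).ne'))

theorem mcvittie_integral_limit_massless_closed_general (a r : ℝ)
    (hr0 : 0 < r) (hra : r < a) :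
    Filter.Tendsto
      (fun M : ℝ => ∫ s in (3 * M)..r, s * (1 - 2 * M / s - s ^ 2 / a ^ 2) ^ (-(3 : ℝ) / 2))
      (nhdsWithin 0 (Set.Ioi 0))
      (nhds (∫ s in (0 : ℝ)..r, s * (1 - s ^ 2 / a ^ 2) ^ (-(3 : ℝ) / 2))) := by
  obtain ⟨c, hc, hκ⟩ := eventually_le_closedMcVittieKappa hr0 hra
  have hlo : Tendsto (fun M : ℝ => 3 * M) (𝓝[>] 0) (𝓝[≥] 0) :=
    tendsto_nhdsWithin_of_tendsto_nhds_of_eventually_within _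
      (((continuous_const_mul 3).tendsto' 0 0 (mul_zero 3)).mono_left nhdsWithin_le_nhds)
      (eventually_nhdsWithin_of_forall fun M (hM : 0 < M) => mem_Ici.2 (by positivity))
  refine intervalIntegral.tendsto_integral_of_dominated_of_tendsto_lowerLimit
    (fun _ => r * c ^ (-(3 : ℝ) / 2)) hr0 hlo ?_ ?_ intervalIntegrable_const ?_
  · exact Eventually.of_forall fun M => by fun_prop
  · filter_upwards [hκ, self_mem_nhdsWithin] with M hκM (hM : 0 < M) s hs
    exact norm_mul_rpow_le (by linarith [hs.1]) hs.2 hc (hκM s hs) (by norm_num)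
  · exact Eventually.of_forall fun s hs => (tendsto_const_nhds.mul
      (tendsto_closedMcVittieKappa_rpow _ hs.1.le (hs.2.trans_lt hra))).mono_left nhdsWithin_le_nhds

/-- The limit as `M → 0⁺` of `∫_{3M}^r s·(1 - 2M/s - s²/a²)^(-3/2) ds` is
`∫_0^r s·(1 - s²/a²)^(-3/2) ds`, obtained by dominated convergence (closed, K = +1 case). -/
theorem mcvittie_integral_limit_massless_closed (a r : ℝ) (ha : 0 < a)
    (hr0 : 0 < r) (hra : r < a) :
    Filter.Tendsto
      (fun M : ℝ => ∫ s in (3 * M)..r, s * (1 - 2 * M / s - s ^ 2 / a ^ 2) ^ (-(3 : ℝ) / 2))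
      (nhdsWithin 0 (Set.Ioi 0))
      (nhds (∫ s in (0 : ℝ)..r, s * (1 - s ^ 2 / a ^ 2) ^ (-(3 : ℝ) / 2))) :=
  mcvittie_integral_limit_massless_closed_general a r hr0 hra
end

section
/- Let M > 0 and a > 3√3·M, and let r₁ < r₂ be the two positive roots of r ↦ 1 − 2M/r − r²/a² (so r₁ ∈ (0, a/√3) and r₂ ∈ (a/√3, a)). Then lim_{r → r₁⁺} (1 − 2M/r − r²/a²)^(1/2) · ∫_{3M}^r s·(1 − 2M/s − s²/a²)^(−3/2) ds = 2a²r₁²/(3r₁² − a²), and lim_{r → r₂⁻} (1 − 2M/r − r²/a²)^(1/2) · ∫_{3M}^r s·(1 − 2M/s − s²/a²)^(−3/2) ds = 2a²r₂²/(3r₂² − a²). -/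
/-!
At a simple zero `r₀` of `κ` with `κ > 0` on one side, `κ(r)^(1/2) * ∫_c^r φ κ^(-3/2)` is the
`∞ / ∞` quotient `(∫_c^r φ κ^(-3/2)) / κ(r)^(-1/2)`, and l'Hôpital's rule gives the limit
`-2 φ(r₀) / κ'(r₀)`. For the McVittie function, `a² s κ(s) = (s - r₁)(r₂ - s)(s + r₁ + r₂)` by
Vieta's relations `a² = r₁² + r₁ r₂ + r₂²`, `2 M a² = r₁ r₂ (r₁ + r₂)`; hence `κ > 0` on `(r₁, r₂)`,
`3M ∈ (r₁, r₂)` because `κ(3M) = 1/3 - 9M²/a² > 0`, and at a root `κ'(r) = (a² - 3r²) / (a² r)`,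
so that `-2r / κ'(r) = 2a²r² / (3r² - a²)`.
-/

open Filter Topology Set

theorem exists_mem_Ioo_sub_eq_div_mul_sub {f g f' g' : ℝ → ℝ} {x y : ℝ} (hxy : x < y)
    (hff' : ∀ t ∈ Icc x y, HasDerivAt f (f' t) t) (hgg' : ∀ t ∈ Icc x y, HasDerivAt g (g' t) t)
    (hg' : ∀ t ∈ Ioo x y, g' t ≠ 0) :
    ∃ ξ ∈ Ioo x y, f y - f x = f' ξ / g' ξ * (g y - g x) := by
  obtain ⟨ξ, hξ, h⟩ := exists_ratio_hasDerivAt_eq_ratio_slope f f' hxy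
    (fun t ht => (hff' t ht).continuousAt.continuousWithinAt)
    (fun t ht => hff' t (Ioo_subset_Icc_self ht)) g g'
    (fun t ht => (hgg' t ht).continuousAt.continuousWithinAt)
    (fun t ht => hgg' t (Ioo_subset_Icc_self ht))
  refine ⟨ξ, hξ, ?_⟩
  rw [div_mul_eq_mul_div, eq_div_iff (hg' ξ hξ)]
  linarith

theorem lhopital_atTop_nhdsGT {f g f' g' : ℝ → ℝ} {a L : ℝ}
    (hff' : ∀ᶠ x in 𝓝[>] a, HasDerivAt f (f' x) x)
    (hgg' : ∀ᶠ x in 𝓝[>] a, HasDerivAt g (g' x) x) (hg' : ∀ᶠ x in 𝓝[>] a, g' x ≠ 0)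
    (hg : Tendsto g (𝓝[>] a) atTop) (hdiv : Tendsto (fun x => f' x / g' x) (𝓝[>] a) (𝓝 L)) :
    Tendsto (fun x => f x / g x) (𝓝[>] a) (𝓝 L) := by
  rw [Metric.tendsto_nhds]
  intro ε hε
  obtain ⟨b, hab, hb⟩ := mem_nhdsGT_iff_exists_Ioo_subset.mp
    (hff'.and (hgg'.and (hg'.and (Metric.tendsto_nhds.mp hdiv (ε / 2) (half_pos hε)))))
  obtain ⟨y, hay, hyb⟩ := exists_between (mem_Ioi.mp hab)
  -- Fix `y`; for `x` near `a`, `f x = q * g x + (f y - q * g y)` with `q` within `ε / 2` of `L`,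
  -- and the bounded second term is negligible against `g x → ∞`.
  set K := |f y| + (|L| + ε / 2) * |g y|
  filter_upwards [Ioo_mem_nhdsGT hay, hg.eventually_gt_atTop (2 * K / ε)] with x hx hgx
  have hsub : Icc x y ⊆ Ioo a b := Icc_subset_Ioo hx.1 hyb
  obtain ⟨ξ, hξ, hslope⟩ := exists_mem_Ioo_sub_eq_div_mul_sub hx.2
    (fun t ht => (hb (hsub ht)).1) (fun t ht => (hb (hsub ht)).2.1)
    (fun t ht => (hb (hsub (Ioo_subset_Icc_self ht))).2.2.1)
  set q := f' ξ / g' ξ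
  have hq : |q - L| < ε / 2 := (hb (hsub (Ioo_subset_Icc_self hξ))).2.2.2
  have hgx0 : 0 < g x := lt_of_le_of_lt (by positivity) hgx
  have hrest : |f y - q * g y| ≤ ε / 2 * g x := by
    have hq' : |q| ≤ |L| + ε / 2 := by linarith [abs_sub_abs_le_abs_sub q L]
    calc |f y - q * g y| ≤ |f y| + |q| * |g y| := by rw [← abs_mul]; exact abs_sub _ _
      _ ≤ K := by simp only [K]; gcongr
      _ ≤ ε / 2 * g x := by rw [div_lt_iff₀ hε] at hgx; linarith
  calc dist (f x / g x) L = |(q - L) + (f y - q * g y) / g x| := by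
        rw [Real.dist_eq]
        congr 1
        field_simp
        linarith
    _ ≤ |q - L| + |f y - q * g y| / g x :=
        (abs_add_le _ _).trans_eq (by rw [abs_div, abs_of_pos hgx0])
    _ < ε / 2 + ε / 2 := add_lt_add_of_lt_of_le hq ((div_le_iff₀ hgx0).mpr hrest)
    _ = ε := add_halves ε

theorem lhopital_atTop_nhdsLT {f g f' g' : ℝ → ℝ} {a L : ℝ}
    (hff' : ∀ᶠ x in 𝓝[<] a, HasDerivAt f (f' x) x)
    (hgg' : ∀ᶠ x in 𝓝[<] a, HasDerivAt g (g' x) x) (hg' : ∀ᶠ x in 𝓝[<] a, g' x ≠ 0)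
    (hg : Tendsto g (𝓝[<] a) atTop) (hdiv : Tendsto (fun x => f' x / g' x) (𝓝[<] a) (𝓝 L)) :
    Tendsto (fun x => f x / g x) (𝓝[<] a) (𝓝 L) := by
  have hdf : ∀ᶠ x in 𝓝[>] (-a), HasDerivAt (f ∘ Neg.neg) (f' (-x) * -1) x :=
    (tendsto_neg_nhdsGT_neg.eventually hff').mono fun x hx => hx.comp x (hasDerivAt_neg x)
  have hdg : ∀ᶠ x in 𝓝[>] (-a), HasDerivAt (g ∘ Neg.neg) (g' (-x) * -1) x :=
    (tendsto_neg_nhdsGT_neg.eventually hgg').mono fun x hx => hx.comp x (hasDerivAt_neg x)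
  have := lhopital_atTop_nhdsGT hdf hdg
    ((tendsto_neg_nhdsGT_neg.eventually hg').mono fun x hx => by simpa using hx)
    (hg.comp tendsto_neg_nhdsGT_neg)
    (by simpa only [mul_neg_one, neg_div_neg_eq, Function.comp_def] using
      hdiv.comp tendsto_neg_nhdsGT_neg)
  simpa only [Function.comp_def, neg_neg] using this.comp tendsto_neg_nhdsLT

section BoundaryLimit

variable {κ κ' φ : ℝ → ℝ} {p q c : ℝ}

theorem tendsto_rpow_neg_half_atTop {l : Filter ℝ} (hκ : Tendsto κ l (𝓝 0))
    (hpos : ∀ᶠ x in l, 0 < κ x) : Tendsto (fun x => κ x ^ (-(1 : ℝ) / 2)) l atTop :=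
  (tendsto_rpow_neg_nhdsGT_zero (by norm_num)).comp (tendsto_nhdsWithin_iff.mpr ⟨hκ, hpos⟩)

theorem hasDerivAt_rpow_neg_half {x : ℝ} (hκ : HasDerivAt κ (κ' x) x) (hpos : 0 < κ x) :
    HasDerivAt (fun s => κ s ^ (-(1 : ℝ) / 2)) (-(1 / 2) * κ' x * κ x ^ (-(3 : ℝ) / 2)) x := by
  convert hκ.rpow_const (p := -(1 : ℝ) / 2) (Or.inl hpos.ne') using 1
  rw [show -(1 : ℝ) / 2 - 1 = -(3 : ℝ) / 2 by norm_num]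
  ring

theorem div_rpow_neg_half_eq_rpow_half_mul {k : ℝ} (hk : 0 < k) (I : ℝ) :
    I / k ^ (-(1 : ℝ) / 2) = k ^ ((1 : ℝ) / 2) * I := by
  rw [neg_div, Real.rpow_neg hk.le, div_inv_eq_mul, mul_comm]

theorem mul_rpow_div_neg_half_mul_rpow {k : ℝ} (hk : 0 < k) (y k' : ℝ) :
    y * k ^ (-(3 : ℝ) / 2) / (-(1 / 2) * k' * k ^ (-(3 : ℝ) / 2)) = -2 * y / k' := by
  rw [mul_div_mul_right _ _ (Real.rpow_pos_of_pos hk _).ne']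
  ring

variable (hc : c ∈ Ioo p q) (hκ : ∀ x ∈ Ioo p q, HasDerivAt κ (κ' x) x)
    (hpos : ∀ x ∈ Ioo p q, 0 < κ x) (hφ : Continuous φ)
include hc hκ hpos hφ

theorem hasDerivAt_integral_mul_rpow (y : ℝ) {x : ℝ} (hx : x ∈ Ioo p q) :
    HasDerivAt (fun r => ∫ s in c..r, φ s * κ s ^ y) (φ x * κ x ^ y) x := by
  have hcont : ContinuousOn (fun s => φ s * κ s ^ y) (Ioo p q) := fun s hs =>
    (hφ.continuousAt.mul ((hκ s hs).continuousAt.rpow_const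
      (Or.inl (hpos s hs).ne'))).continuousWithinAt
  exact intervalIntegral.integral_hasDerivAt_right
    (hcont.mono (ordConnected_Ioo.uIcc_subset hc hx)).intervalIntegrable
    (hcont.stronglyMeasurableAtFilter isOpen_Ioo x hx) (hcont.continuousAt (isOpen_Ioo.mem_nhds hx))

theorem tendsto_rpow_half_mul_integral_nhdsGT (hκp : ContinuousAt κ p) (hκp0 : κ p = 0)
    (hκ'p : ContinuousAt κ' p) (hκ'p0 : κ' p ≠ 0) :
    Tendsto (fun r => κ r ^ ((1 : ℝ) / 2) * ∫ s in c..r, φ s * κ s ^ (-(3 : ℝ) / 2)) (𝓝[>] p)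
      (𝓝 (-2 * φ p / κ' p)) := by
  have hIoo : Ioo p q ∈ 𝓝[>] p := Ioo_mem_nhdsGT (hc.1.trans hc.2)
  have hev : ∀ᶠ x in 𝓝[>] p, κ' x ≠ 0 ∧ 0 < κ x :=
    ((hκ'p.eventually_ne hκ'p0).filter_mono nhdsWithin_le_nhds).and (eventually_of_mem hIoo hpos)
  have hratio : Tendsto (fun x => -2 * φ x / κ' x) (𝓝[>] p) (𝓝 (-2 * φ p / κ' p)) :=
    ((continuousAt_const.mul hφ.continuousAt).div hκ'p hκ'p0).tendsto.mono_left nhdsWithin_le_nhds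
  have hlim := lhopital_atTop_nhdsGT
    (eventually_of_mem hIoo fun x hx => hasDerivAt_integral_mul_rpow hc hκ hpos hφ _ hx)
    (eventually_of_mem hIoo fun x hx => hasDerivAt_rpow_neg_half (hκ x hx) (hpos x hx))
    (hev.mono fun x hx =>
      mul_ne_zero (mul_ne_zero (by norm_num) hx.1) (Real.rpow_pos_of_pos hx.2 _).ne')
    (tendsto_rpow_neg_half_atTop (hκp0 ▸ hκp.tendsto.mono_left nhdsWithin_le_nhds)
      (eventually_of_mem hIoo hpos))
    (hratio.congr' (hev.mono fun x hx => (mul_rpow_div_neg_half_mul_rpow hx.2 _ _).symm))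
  exact hlim.congr' (eventually_of_mem hIoo fun r hr =>
    div_rpow_neg_half_eq_rpow_half_mul (hpos r hr) _)

theorem tendsto_rpow_half_mul_integral_nhdsLT (hκq : ContinuousAt κ q) (hκq0 : κ q = 0)
    (hκ'q : ContinuousAt κ' q) (hκ'q0 : κ' q ≠ 0) :
    Tendsto (fun r => κ r ^ ((1 : ℝ) / 2) * ∫ s in c..r, φ s * κ s ^ (-(3 : ℝ) / 2)) (𝓝[<] q)
      (𝓝 (-2 * φ q / κ' q)) := by
  have hIoo : Ioo p q ∈ 𝓝[<] q := Ioo_mem_nhdsLT (hc.1.trans hc.2)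
  have hev : ∀ᶠ x in 𝓝[<] q, κ' x ≠ 0 ∧ 0 < κ x :=
    ((hκ'q.eventually_ne hκ'q0).filter_mono nhdsWithin_le_nhds).and (eventually_of_mem hIoo hpos)
  have hratio : Tendsto (fun x => -2 * φ x / κ' x) (𝓝[<] q) (𝓝 (-2 * φ q / κ' q)) :=
    ((continuousAt_const.mul hφ.continuousAt).div hκ'q hκ'q0).tendsto.mono_left nhdsWithin_le_nhds
  have hlim := lhopital_atTop_nhdsLT
    (eventually_of_mem hIoo fun x hx => hasDerivAt_integral_mul_rpow hc hκ hpos hφ _ hx)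
    (eventually_of_mem hIoo fun x hx => hasDerivAt_rpow_neg_half (hκ x hx) (hpos x hx))
    (hev.mono fun x hx =>
      mul_ne_zero (mul_ne_zero (by norm_num) hx.1) (Real.rpow_pos_of_pos hx.2 _).ne')
    (tendsto_rpow_neg_half_atTop (hκq0 ▸ hκq.tendsto.mono_left nhdsWithin_le_nhds)
      (eventually_of_mem hIoo hpos))
    (hratio.congr' (hev.mono fun x hx => (mul_rpow_div_neg_half_mul_rpow hx.2 _ _).symm))
  exact hlim.congr' (eventually_of_mem hIoo fun r hr =>
    div_rpow_neg_half_eq_rpow_half_mul (hpos r hr) _)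

end BoundaryLimit

noncomputable def mcvittieKappa (M a s : ℝ) : ℝ := 1 - 2 * M / s - s ^ 2 / a ^ 2

noncomputable def mcvittieKappaDeriv (M a s : ℝ) : ℝ := 2 * M / s ^ 2 - 2 * s / a ^ 2

section McVittieRoots

variable {M a r₁ r₂ s : ℝ}

theorem mcvittieKappa_roots_vieta (hne : r₁ ≠ r₂) (hr₁ : r₁ ≠ 0) (hr₂ : r₂ ≠ 0) (ha : a ≠ 0)
    (h₁ : mcvittieKappa M a r₁ = 0) (h₂ : mcvittieKappa M a r₂ = 0) :
    a ^ 2 = r₁ ^ 2 + r₁ * r₂ + r₂ ^ 2 ∧ 2 * M * a ^ 2 = r₁ * r₂ * (r₁ + r₂) := by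
  unfold mcvittieKappa at h₁ h₂
  field_simp at h₁ h₂
  have hA : a ^ 2 = r₁ ^ 2 + r₁ * r₂ + r₂ ^ 2 :=
    mul_left_cancel₀ (sub_ne_zero.mpr hne) (by linear_combination h₁ - h₂)
  exact ⟨hA, by linear_combination -h₁ + r₁ * hA⟩

variable (hA : a ^ 2 = r₁ ^ 2 + r₁ * r₂ + r₂ ^ 2) (hB : 2 * M * a ^ 2 = r₁ * r₂ * (r₁ + r₂))
include hA hB

theorem mcvittieKappa_eq_of_vieta (ha : a ≠ 0) (hs : s ≠ 0) :
    mcvittieKappa M a s = (s - r₁) * (r₂ - s) * (s + r₁ + r₂) / (a ^ 2 * s) := by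
  unfold mcvittieKappa
  field_simp
  linear_combination s * hA - hB

theorem mcvittieKappa_pos_of_mem_Ioo (ha : a ≠ 0) (hr₁ : 0 < r₁) (hs : s ∈ Ioo r₁ r₂) :
    0 < mcvittieKappa M a s := by
  have hs0 : 0 < s := hr₁.trans hs.1
  rw [mcvittieKappa_eq_of_vieta hA hB ha hs0.ne']
  have h₁ : 0 < s - r₁ := sub_pos.mpr hs.1
  have h₂ : 0 < r₂ - s := sub_pos.mpr hs.2
  have h₃ : 0 < s + r₁ + r₂ := by linarith [hs.2]
  positivity

theorem three_mul_mem_Ioo_of_vieta (hM : 0 < M) (ha : 27 * M ^ 2 < a ^ 2) (hr₁ : 0 < r₁)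
    (hlt : r₁ < r₂) : 3 * M ∈ Ioo r₁ r₂ := by
  have ha0 : a ≠ 0 := by rintro rfl; nlinarith
  have hκ : 0 < mcvittieKappa M a (3 * M) := by
    rw [show mcvittieKappa M a (3 * M) = (a ^ 2 - 27 * M ^ 2) / (3 * a ^ 2) by
      unfold mcvittieKappa; field_simp; ring]
    exact div_pos (by linarith) (by positivity)
  rw [mcvittieKappa_eq_of_vieta hA hB ha0 (by positivity)] at hκ
  have : 0 < (3 * M - r₁) * (r₂ - 3 * M) := by
    have := (div_pos_iff_of_pos_right (by positivity)).mp hκ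
    exact (pos_iff_pos_of_mul_pos this).mpr (by linarith)
  constructor <;> nlinarith

end McVittieRoots

section McVittieDeriv

variable {M a s : ℝ}

theorem hasDerivAt_mcvittieKappa (hs : s ≠ 0) :
    HasDerivAt (mcvittieKappa M a) (mcvittieKappaDeriv M a s) s := by
  refine (((hasDerivAt_const s 1).sub ((hasDerivAt_const s (2 * M)).div (hasDerivAt_id s) hs)).sub
    ((hasDerivAt_pow 2 s).div_const (a ^ 2))).congr_deriv ?_
  simp only [mcvittieKappaDeriv, id, zero_sub, zero_mul]
  ring

theorem continuousAt_mcvittieKappaDeriv (hs : s ≠ 0) : ContinuousAt (mcvittieKappaDeriv M a) s :=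
  (continuousAt_const.div (continuousAt_id.pow 2) (pow_ne_zero 2 hs)).sub (by fun_prop)

variable (ha : a ≠ 0) (hs : s ≠ 0) (hroot : mcvittieKappa M a s = 0) (h3 : 3 * s ^ 2 ≠ a ^ 2)
include ha hs hroot

theorem mcvittieKappaDeriv_eq_of_root :
    mcvittieKappaDeriv M a s = (a ^ 2 - 3 * s ^ 2) / (a ^ 2 * s) := by
  unfold mcvittieKappa at hroot
  unfold mcvittieKappaDeriv
  field_simp at hroot ⊢
  linear_combination -hroot

include h3

theorem mcvittieKappaDeriv_ne_zero_of_root : mcvittieKappaDeriv M a s ≠ 0 := by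
  rw [mcvittieKappaDeriv_eq_of_root ha hs hroot]
  exact div_ne_zero (sub_ne_zero.mpr h3.symm) (by positivity)

theorem neg_two_mul_div_mcvittieKappaDeriv_of_root :
    -2 * s / mcvittieKappaDeriv M a s = 2 * a ^ 2 * s ^ 2 / (3 * s ^ 2 - a ^ 2) := by
  rw [mcvittieKappaDeriv_eq_of_root ha hs hroot, div_div_eq_mul_div, div_eq_div_iff (sub_ne_zero.mpr h3.symm) (sub_ne_zero.mpr h3)]
  ring

end McVittieDeriv

theorem mcvittie_closed_boundary_limits_general (M a r₁ r₂ : ℝ) (hM : 0 < M)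
    (ha : 3 * Real.sqrt 3 * M < a)
    (hr₁pos : 0 < r₁) (hlt : r₁ < r₂)
    (hroot₁ : 1 - 2 * M / r₁ - r₁ ^ 2 / a ^ 2 = 0)
    (hroot₂ : 1 - 2 * M / r₂ - r₂ ^ 2 / a ^ 2 = 0) :
    Filter.Tendsto
      (fun r : ℝ => (1 - 2 * M / r - r ^ 2 / a ^ 2) ^ ((1 : ℝ) / 2) *
        ∫ s in (3 * M)..r, s * (1 - 2 * M / s - s ^ 2 / a ^ 2) ^ (-(3 : ℝ) / 2))
      (nhdsWithin r₁ (Set.Ioi r₁))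
      (nhds (2 * a ^ 2 * r₁ ^ 2 / (3 * r₁ ^ 2 - a ^ 2))) ∧
    Filter.Tendsto
      (fun r : ℝ => (1 - 2 * M / r - r ^ 2 / a ^ 2) ^ ((1 : ℝ) / 2) *
        ∫ s in (3 * M)..r, s * (1 - 2 * M / s - s ^ 2 / a ^ 2) ^ (-(3 : ℝ) / 2))
      (nhdsWithin r₂ (Set.Iio r₂))
      (nhds (2 * a ^ 2 * r₂ ^ 2 / (3 * r₂ ^ 2 - a ^ 2))) := by
  have ha27 : 27 * M ^ 2 < a ^ 2 := by
    have h3 : (3 * Real.sqrt 3 * M) ^ 2 = 27 * M ^ 2 := by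
      rw [mul_pow, mul_pow, Real.sq_sqrt zero_le_three]; ring
    exact h3 ▸ pow_lt_pow_left₀ ha (by positivity) two_ne_zero
  have ha0 : a ≠ 0 := by rintro rfl; nlinarith
  have hr₂pos : 0 < r₂ := hr₁pos.trans hlt
  obtain ⟨hA, hB⟩ := mcvittieKappa_roots_vieta hlt.ne hr₁pos.ne' hr₂pos.ne' ha0 hroot₁ hroot₂
  have h3M := three_mul_mem_Ioo_of_vieta hA hB hM ha27 hr₁pos hlt
  have hκ : ∀ x ∈ Ioo r₁ r₂, HasDerivAt (mcvittieKappa M a) (mcvittieKappaDeriv M a x) x :=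
    fun x hx => hasDerivAt_mcvittieKappa (hr₁pos.trans hx.1).ne'
  have hpos : ∀ x ∈ Ioo r₁ r₂, 0 < mcvittieKappa M a x :=
    fun x hx => mcvittieKappa_pos_of_mem_Ioo hA hB ha0 hr₁pos hx
  have h3r₁ : 3 * r₁ ^ 2 ≠ a ^ 2 := (by nlinarith : 3 * r₁ ^ 2 < a ^ 2).ne
  have h3r₂ : 3 * r₂ ^ 2 ≠ a ^ 2 := (by nlinarith : a ^ 2 < 3 * r₂ ^ 2).ne'
  constructor
  · rw [← neg_two_mul_div_mcvittieKappaDeriv_of_root ha0 hr₁pos.ne' hroot₁ h3r₁]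
    exact tendsto_rpow_half_mul_integral_nhdsGT h3M hκ hpos continuous_id
      (hasDerivAt_mcvittieKappa hr₁pos.ne').continuousAt hroot₁
      (continuousAt_mcvittieKappaDeriv hr₁pos.ne')
      (mcvittieKappaDeriv_ne_zero_of_root ha0 hr₁pos.ne' hroot₁ h3r₁)
  · rw [← neg_two_mul_div_mcvittieKappaDeriv_of_root ha0 hr₂pos.ne' hroot₂ h3r₂]
    exact tendsto_rpow_half_mul_integral_nhdsLT h3M hκ hpos continuous_id
      (hasDerivAt_mcvittieKappa hr₂pos.ne').continuousAt hroot₂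
      (continuousAt_mcvittieKappaDeriv hr₂pos.ne')
      (mcvittieKappaDeriv_ne_zero_of_root ha0 hr₂pos.ne' hroot₂ h3r₂)

/-- Limits of `κ(r)^(1/2)·∫_{3M}^r s·κ(s)^(-3/2) ds` as `r` tends to the two
positive roots `r₁ < r₂` of `κ(r) = 1 - 2M/r - r²/a²` (closed, K = +1 McVittie case,
with `a > 3√3·M`), obtained via l'Hôpital's rule. -/
theorem mcvittie_closed_boundary_limits (M a r₁ r₂ : ℝ) (hM : 0 < M)
    (ha : 3 * Real.sqrt 3 * M < a)
    (hr₁pos : 0 < r₁) (hlt : r₁ < r₂)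
    (hroot₁ : 1 - 2 * M / r₁ - r₁ ^ 2 / a ^ 2 = 0)
    (hroot₂ : 1 - 2 * M / r₂ - r₂ ^ 2 / a ^ 2 = 0)
    (hr₁mem : r₁ ∈ Set.Ioo 0 (a / Real.sqrt 3))
    (hr₂mem : r₂ ∈ Set.Ioo (a / Real.sqrt 3) a) :
    Filter.Tendsto
      (fun r : ℝ => (1 - 2 * M / r - r ^ 2 / a ^ 2) ^ ((1 : ℝ) / 2) *
        ∫ s in (3 * M)..r, s * (1 - 2 * M / s - s ^ 2 / a ^ 2) ^ (-(3 : ℝ) / 2))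
      (nhdsWithin r₁ (Set.Ioi r₁))
      (nhds (2 * a ^ 2 * r₁ ^ 2 / (3 * r₁ ^ 2 - a ^ 2))) ∧
    Filter.Tendsto
      (fun r : ℝ => (1 - 2 * M / r - r ^ 2 / a ^ 2) ^ ((1 : ℝ) / 2) *
        ∫ s in (3 * M)..r, s * (1 - 2 * M / s - s ^ 2 / a ^ 2) ^ (-(3 : ℝ) / 2))
      (nhdsWithin r₂ (Set.Iio r₂))
      (nhds (2 * a ^ 2 * r₂ ^ 2 / (3 * r₂ ^ 2 - a ^ 2))) :=
  mcvittie_closed_boundary_limits_general M a r₁ r₂ hM ha hr₁pos hlt hroot₁ hroot₂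
end

section
/- Let M > 0 and for a > 0 let r₁(a) = (2a/√3)·sinh((1/3)·arsinh(3√3·M/a)) be the unique positive root of r ↦ 1 − 2M/r + r²/a², and set ε(a) = 1 − r₁(a)/(2M). Then: (1) lim_{a → +∞} r₁(a) = 2M; (2) lim_{a → 0⁺} r₁(a)/(2M·a²)^(1/3) = 1; (3) for all a > 0, ε(a) = r₁(a)²/(a² + r₁(a)²) and ε(a) ∈ (0, 1); (4) lim_{a → +∞} ε(a) = 0 and lim_{a → 0⁺} ε(a) = 1. -/
/-!
Writing `r₁ = (2a/√3)·s`, the triple-angle formula `sinh 3t = 4 sinh³ t + 3 sinh t` turns the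
definition of `s` into the depressed cubic `r³ + a²r = 2Ma²` (this is Cardano's trigonometric
root, and the cubic is `κ = 0` cleared of denominators). Everything else follows from the cubic
alone: it forces `0 < r < 2M` and `ε = r²/(a² + r²)`; the squeeze `2M - (2M)³/a² ≤ r ≤ 2M`
gives the limit at infinity, and `r³ = 2Ma²·ε` with `ε < 1` gives `r → 0` and then
`r/(2Ma²)^(1/3) = ε^(1/3) → 1` as `a → 0⁺`.
-/

open Filter Topology Real

theorem Real.sinh_third_arsinh_cubic (x : ℝ) :
    4 * sinh (1 / 3 * arsinh x) ^ 3 + 3 * sinh (1 / 3 * arsinh x) = x := by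
  rw [← sinh_three_mul, ← mul_assoc, mul_one_div_cancel three_ne_zero, one_mul, sinh_arsinh]

theorem cubic_of_eq_sinh_arsinh {M a r : ℝ} (ha : a ≠ 0)
    (hr : r = 2 * a / √3 * sinh (1 / 3 * arsinh (3 * √3 * M / a))) :
    r ^ 3 + a ^ 2 * r = 2 * M * a ^ 2 := by
  have hs := sinh_third_arsinh_cubic (3 * √3 * M / a)
  set s := sinh (1 / 3 * arsinh (3 * √3 * M / a))
  have h3 : √3 ^ 2 = 3 := sq_sqrt (by norm_num)
  have h3' : √3 ≠ 0 := by positivity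
  rw [eq_div_iff ha] at hs
  subst hr
  field_simp
  linear_combination hs + (a * s - √3 * M) * h3

section Cubic

variable {M a r : ℝ}

theorem pos_of_cubic (hM : 0 < M) (ha : a ≠ 0) (h : r ^ 3 + a ^ 2 * r = 2 * M * a ^ 2) :
    0 < r := by
  have hprod : 0 < r * (r ^ 2 + a ^ 2) := by
    rw [show r * (r ^ 2 + a ^ 2) = r ^ 3 + a ^ 2 * r by ring, h]
    positivity
  exact pos_of_mul_pos_left hprod (by positivity)

theorem lt_of_cubic (hM : 0 < M) (ha : a ≠ 0) (h : r ^ 3 + a ^ 2 * r = 2 * M * a ^ 2) :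
    r < 2 * M := by
  have hr3 : 0 < r ^ 3 := pow_pos (pos_of_cubic hM ha h) 3
  have ha2 : 0 < a ^ 2 := by positivity
  nlinarith

theorem one_sub_div_eq_of_cubic (hM : M ≠ 0) (ha : a ≠ 0)
    (h : r ^ 3 + a ^ 2 * r = 2 * M * a ^ 2) :
    1 - r / (2 * M) = r ^ 2 / (a ^ 2 + r ^ 2) := by
  have hden : a ^ 2 + r ^ 2 ≠ 0 := by positivity
  field_simp
  linear_combination -h

theorem one_sub_div_mem_Ioo_of_cubic (hM : 0 < M) (ha : a ≠ 0)
    (h : r ^ 3 + a ^ 2 * r = 2 * M * a ^ 2) :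
    1 - r / (2 * M) ∈ Set.Ioo 0 1 := by
  have hr := pos_of_cubic hM ha h
  have hlt := lt_of_cubic hM ha h
  constructor
  · rw [sub_pos, div_lt_one (by positivity)]
    exact hlt
  · have : 0 < r / (2 * M) := by positivity
    linarith

theorem eq_rpow_mul_rpow_of_cubic (hM : 0 < M) (ha : a ≠ 0)
    (h : r ^ 3 + a ^ 2 * r = 2 * M * a ^ 2) :
    r = (2 * M * a ^ 2) ^ (1 / 3 : ℝ) * (1 - r / (2 * M)) ^ (1 / 3 : ℝ) := by
  have hr3 : r ^ 3 = 2 * M * a ^ 2 * (1 - r / (2 * M)) := by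
    field_simp
    linear_combination h
  rw [← mul_rpow (by positivity) (one_sub_div_mem_Ioo_of_cubic hM ha h).1.le, ← hr3, one_div]
  exact_mod_cast (pow_rpow_inv_natCast (pos_of_cubic hM ha h).le three_ne_zero).symm

theorem sub_div_sq_le_of_cubic (hM : 0 < M) (ha : a ≠ 0)
    (h : r ^ 3 + a ^ 2 * r = 2 * M * a ^ 2) :
    2 * M - (2 * M) ^ 3 / a ^ 2 ≤ r := by
  have hr := pos_of_cubic hM ha h
  have hr3 : r ^ 3 ≤ (2 * M) ^ 3 := pow_le_pow_left₀ hr.le (lt_of_cubic hM ha h).le 3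
  have hr_eq : r ^ 3 / a ^ 2 = 2 * M - r := by
    rw [div_eq_iff (pow_ne_zero 2 ha)]
    linear_combination h
  have : r ^ 3 / a ^ 2 ≤ (2 * M) ^ 3 / a ^ 2 := by gcongr
  linarith

end Cubic

section Limits

variable {M : ℝ} {f : ℝ → ℝ}

theorem tendsto_atTop_of_cubic (hM : 0 < M)
    (hf : ∀ a, 0 < a → f a ^ 3 + a ^ 2 * f a = 2 * M * a ^ 2) :
    Tendsto f atTop (𝓝 (2 * M)) := by
  have hlower : Tendsto (fun a : ℝ => 2 * M - (2 * M) ^ 3 / a ^ 2) atTop (𝓝 (2 * M)) := by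
    simpa using (tendsto_const_nhds (x := 2 * M)).sub
      (tendsto_const_nhds.div_atTop (tendsto_pow_atTop (α := ℝ) two_ne_zero))
  refine tendsto_of_tendsto_of_tendsto_of_le_of_le' hlower tendsto_const_nhds ?_ ?_
  all_goals filter_upwards [eventually_gt_atTop 0] with a ha
  · exact sub_div_sq_le_of_cubic hM ha.ne' (hf a ha)
  · exact (lt_of_cubic hM ha.ne' (hf a ha)).le

theorem tendsto_nhdsGT_zero_of_cubic (hM : 0 < M)
    (hf : ∀ a, 0 < a → f a ^ 3 + a ^ 2 * f a = 2 * M * a ^ 2) :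
    Tendsto f (𝓝[>] 0) (𝓝 0) := by
  have hupper : Tendsto (fun a : ℝ => (2 * M * a ^ 2) ^ (1 / 3 : ℝ)) (𝓝[>] 0) (𝓝 0) := by
    refine tendsto_nhdsWithin_of_tendsto_nhds ?_
    have hcont : Continuous fun a : ℝ => (2 * M * a ^ 2) ^ (1 / 3 : ℝ) :=
      (continuous_const.mul (continuous_pow 2)).rpow_const fun _ => Or.inr (by norm_num)
    simpa using hcont.tendsto 0
  refine tendsto_of_tendsto_of_tendsto_of_le_of_le' tendsto_const_nhds hupper ?_ ?_
  all_goals filter_upwards [self_mem_nhdsWithin] with a (ha : 0 < a)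
  · exact (pos_of_cubic hM ha.ne' (hf a ha)).le
  · have hε := one_sub_div_mem_Ioo_of_cubic hM ha.ne' (hf a ha)
    calc f a = (2 * M * a ^ 2) ^ (1 / 3 : ℝ) * (1 - f a / (2 * M)) ^ (1 / 3 : ℝ) :=
          eq_rpow_mul_rpow_of_cubic hM ha.ne' (hf a ha)
      _ ≤ (2 * M * a ^ 2) ^ (1 / 3 : ℝ) * 1 := by
          gcongr
          exact rpow_le_one hε.1.le hε.2.le (by norm_num)
      _ = (2 * M * a ^ 2) ^ (1 / 3 : ℝ) := mul_one _

theorem tendsto_one_sub_div_nhdsGT_zero_of_cubic (hM : 0 < M)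
    (hf : ∀ a, 0 < a → f a ^ 3 + a ^ 2 * f a = 2 * M * a ^ 2) :
    Tendsto (fun a => 1 - f a / (2 * M)) (𝓝[>] 0) (𝓝 1) := by
  simpa using tendsto_const_nhds.sub ((tendsto_nhdsGT_zero_of_cubic hM hf).div_const (2 * M))

theorem tendsto_div_rpow_of_cubic (hM : 0 < M)
    (hf : ∀ a, 0 < a → f a ^ 3 + a ^ 2 * f a = 2 * M * a ^ 2) :
    Tendsto (fun a => f a / (2 * M * a ^ 2) ^ (1 / 3 : ℝ)) (𝓝[>] 0) (𝓝 1) := by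
  have hlim : Tendsto (fun a => (1 - f a / (2 * M)) ^ (1 / 3 : ℝ)) (𝓝[>] 0) (𝓝 1) := by
    simpa using (tendsto_one_sub_div_nhdsGT_zero_of_cubic hM hf).rpow_const
      (Or.inl one_ne_zero)
  refine hlim.congr' ?_
  filter_upwards [self_mem_nhdsWithin] with a (ha : 0 < a)
  have hroot : 0 < (2 * M * a ^ 2) ^ (1 / 3 : ℝ) := by positivity
  rw [eq_div_iff hroot.ne', mul_comm]
  exact (eq_rpow_mul_rpow_of_cubic hM ha.ne' (hf a ha)).symm

end Limits

/-- Bounds and asymptotic behaviour of the allowed-boundary radius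
`r₁(a)` of the open (K = -1) McVittie spacetime and of the auxiliary parameter
`ε(a) = 1 - r₁(a)/(2M)`. -/
theorem mcvittie_open_boundary_asymptotics (M : ℝ) (hM : 0 < M)
    (r₁ ε : ℝ → ℝ)
    (hr₁ : ∀ a : ℝ, 0 < a → r₁ a = (2 * a / Real.sqrt 3) *
      Real.sinh ((1 / 3) * Real.arsinh (3 * Real.sqrt 3 * M / a)))
    (hε : ∀ a : ℝ, 0 < a → ε a = 1 - r₁ a / (2 * M)) :
    Filter.Tendsto r₁ Filter.atTop (nhds (2 * M)) ∧
    Filter.Tendsto (fun a : ℝ => r₁ a / (2 * M * a ^ 2) ^ ((1 : ℝ) / 3))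
      (nhdsWithin 0 (Set.Ioi 0)) (nhds 1) ∧
    (∀ a : ℝ, 0 < a →
      ε a = (r₁ a) ^ 2 / (a ^ 2 + (r₁ a) ^ 2) ∧ ε a ∈ Set.Ioo (0 : ℝ) 1) ∧
    Filter.Tendsto ε Filter.atTop (nhds 0) ∧
    Filter.Tendsto ε (nhdsWithin 0 (Set.Ioi 0)) (nhds 1) := by
  have hcubic : ∀ a, 0 < a → r₁ a ^ 3 + a ^ 2 * r₁ a = 2 * M * a ^ 2 :=
    fun a ha => cubic_of_eq_sinh_arsinh ha.ne' (hr₁ a ha)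
  have hlim_atTop := tendsto_atTop_of_cubic hM hcubic
  refine ⟨hlim_atTop, tendsto_div_rpow_of_cubic hM hcubic, fun a ha => ?_, ?_, ?_⟩
  · rw [hε a ha]
    exact ⟨one_sub_div_eq_of_cubic hM.ne' ha.ne' (hcubic a ha),
      one_sub_div_mem_Ioo_of_cubic hM ha.ne' (hcubic a ha)⟩
  · have hlim : Tendsto (fun a => 1 - r₁ a / (2 * M)) atTop (𝓝 0) := by
      simpa [div_self (by positivity : 2 * M ≠ 0)] using
        (tendsto_const_nhds (x := (1 : ℝ))).sub (hlim_atTop.div_const (2 * M))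
    exact hlim.congr' (by filter_upwards [eventually_gt_atTop 0] with a ha using (hε a ha).symm)
  · exact (tendsto_one_sub_div_nhdsGT_zero_of_cubic hM hcubic).congr'
      (by filter_upwards [self_mem_nhdsWithin] with a (ha : 0 < a) using (hε a ha).symm)
end

section
/- For every ε ∈ (0, 1), with J(ε) = ∫_0^1 (1 − ξ)^(−1/2)·(2ξ + ε)·(ξ² + εξ + ε)^(−5/2) dξ, τ₀ = −arctan((2 + ε)/√(ε(4 − ε))) and τ₁ = −arctan(ε/√(ε(4 − ε))), one has τ₀ ∈ (−π/2, −π/3), τ₁ ∈ (−π/6, 0), and J(ε) = −2·ε^(−3/2)·(1 − ε/4)^(−3/2)·(1 + 2ε)^(−1/4)·∫_{τ₀}^{τ₁} sin τ · (cos τ)^(5/2) / √(sin(τ − τ₀)) dτ. -/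
open MeasureTheory Real Set

set_option maxHeartbeats 1000000 in
/-- The trigonometric representation of the integral `J(ε)` that governs
the causal character of the allowed boundary of open McVittie spacetimes, obtained by
the substitutions `ζ = (1-ξ)^(1/2)` and `n·tan τ = ζ² - m`. -/
theorem mcvittie_J_trig_representation (ε : ℝ) (hε : ε ∈ Set.Ioo (0 : ℝ) 1)
    (J τ₀ τ₁ : ℝ)
    (hJ : J = ∫ ξ in (0 : ℝ)..1,
      (1 - ξ) ^ (-(1 : ℝ) / 2) * (2 * ξ + ε) * (ξ ^ 2 + ε * ξ + ε) ^ (-(5 : ℝ) / 2))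
    (hτ₀ : τ₀ = -Real.arctan ((2 + ε) / Real.sqrt (ε * (4 - ε))))
    (hτ₁ : τ₁ = -Real.arctan (ε / Real.sqrt (ε * (4 - ε)))) :
    τ₀ ∈ Set.Ioo (-(Real.pi / 2)) (-(Real.pi / 3)) ∧
    τ₁ ∈ Set.Ioo (-(Real.pi / 6)) 0 ∧
    J = -2 * ε ^ (-(3 : ℝ) / 2) * (1 - ε / 4) ^ (-(3 : ℝ) / 2) * (1 + 2 * ε) ^ (-(1 : ℝ) / 4) *
      ∫ τ in τ₀..τ₁, Real.sin τ * Real.cos τ ^ ((5 : ℝ) / 2) / Real.sqrt (Real.sin (τ - τ₀)) := by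
  obtain ⟨hε0, hε1⟩ := hε
  set q : ℝ := Real.sqrt (ε * (4 - ε)) with hqdef
  have hq2 : q ^ 2 = ε * (4 - ε) := Real.sq_sqrt (by nlinarith)
  have hqpos : 0 < q := Real.sqrt_pos.mpr (by nlinarith)
  -- bounds on τ₀
  have hsqrt3 : Real.sqrt 3 ^ 2 = 3 := Real.sq_sqrt (by norm_num)
  have hsqrt3pos : (0:ℝ) < Real.sqrt 3 := Real.sqrt_pos.mpr (by norm_num)
  have hb0 : Real.sqrt 3 < (2 + ε) / q := by
    rw [lt_div_iff₀ hqpos]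
    refine lt_of_pow_lt_pow_left₀ 2 (by nlinarith) ?_
    rw [mul_pow, hsqrt3, hq2]; nlinarith
  have hτ₀mem : τ₀ ∈ Set.Ioo (-(Real.pi / 2)) (-(Real.pi / 3)) := by
    constructor
    · rw [hτ₀, neg_lt_neg_iff]; exact Real.arctan_lt_pi_div_two _
    · rw [hτ₀, neg_lt_neg_iff]
      have h3 : Real.arctan (Real.sqrt 3) = Real.pi / 3 := by
        rw [← Real.tan_pi_div_three]
        exact Real.arctan_tan (by linarith [Real.pi_pos]) (by linarith [Real.pi_pos])
      rw [← h3]; exact Real.arctan_strictMono hb0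
  have hb1 : ε / q < 1 / Real.sqrt 3 := by
    rw [div_lt_div_iff₀ hqpos hsqrt3pos]
    refine lt_of_pow_lt_pow_left₀ 2 (by positivity) ?_
    rw [mul_pow, hsqrt3, one_mul, hq2]; nlinarith
  have hτ₁mem : τ₁ ∈ Set.Ioo (-(Real.pi / 6)) 0 := by
    constructor
    · rw [hτ₁, neg_lt_neg_iff]
      have h6 : Real.arctan (1 / Real.sqrt 3) = Real.pi / 6 := by
        rw [← Real.tan_pi_div_six]
        exact Real.arctan_tan (by linarith [Real.pi_pos]) (by linarith [Real.pi_pos])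
      rw [← h6]; exact Real.arctan_strictMono hb1
    · rw [hτ₁, neg_lt_zero, ← Real.arctan_zero]
      exact Real.arctan_strictMono (by positivity)
  refine ⟨hτ₀mem, hτ₁mem, ?_⟩
  obtain ⟨hτ₀l, hτ₀u⟩ := hτ₀mem
  obtain ⟨hτ₁l, hτ₁u⟩ := hτ₁mem
  have hpi := Real.pi_pos
  have hττ : τ₀ < τ₁ := by
    rw [hτ₀, hτ₁, neg_lt_neg_iff]
    refine Real.arctan_strictMono ?_
    rw [div_lt_div_iff_of_pos_right hqpos]; linarith
  -- tan values at endpoints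
  have htan0 : Real.tan τ₀ = -((2 + ε) / q) := by
    rw [hτ₀, Real.tan_neg, Real.tan_arctan]
  have htan1 : Real.tan τ₁ = -(ε / q) := by
    rw [hτ₁, Real.tan_neg, Real.tan_arctan]
  -- the substitution function
  set g : ℝ → ℝ := fun τ => -ε / 2 - q / 2 * Real.tan τ with hgdef
  have hg0 : g τ₀ = 1 := by
    rw [hgdef]; simp only [htan0]; field_simp; ring
  have hg1 : g τ₁ = 0 := by
    rw [hgdef]; simp only [htan1]; field_simp; ring
  have hsub : ∀ τ ∈ Set.Icc τ₀ τ₁, τ ∈ Set.Ioo (-(Real.pi/2)) (Real.pi/2) :=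
    fun τ hτ => ⟨lt_of_lt_of_le hτ₀l hτ.1, lt_of_le_of_lt hτ.2 (by linarith)⟩
  have hcos : ∀ τ ∈ Set.Icc τ₀ τ₁, 0 < Real.cos τ := fun τ hτ =>
    Real.cos_pos_of_mem_Ioo (hsub τ hτ)
  have hanti : StrictAntiOn g (Set.Icc τ₀ τ₁) := by
    intro x hx y hy hxy
    have := Real.strictMonoOn_tan (hsub x hx) (hsub y hy) hxy
    rw [hgdef]; simp only
    have : q / 2 * Real.tan x < q / 2 * Real.tan y := by
      exact mul_lt_mul_of_pos_left this (by positivity)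
    linarith
  have hgcont : ContinuousOn g (Set.Icc τ₀ τ₁) := by
    refine ContinuousOn.sub continuousOn_const (ContinuousOn.mul continuousOn_const ?_)
    exact fun τ hτ => (Real.continuousAt_tan.mpr (hcos τ hτ).ne').continuousWithinAt
  -- image of the open interval
  have himg : g '' Set.Ioo τ₀ τ₁ = Set.Ioo (0:ℝ) 1 := by
    apply Set.Subset.antisymm
    · rintro _ ⟨τ, hτ, rfl⟩
      have h1 : g τ < g τ₀ := hanti (Set.left_mem_Icc.mpr hττ.le)
        ⟨hτ.1.le, hτ.2.le⟩ hτ.1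
      have h2 : g τ₁ < g τ := hanti ⟨hτ.1.le, hτ.2.le⟩
        (Set.right_mem_Icc.mpr hττ.le) hτ.2
      rw [hg0] at h1; rw [hg1] at h2
      exact ⟨h2, h1⟩
    · have := intermediate_value_Ioo' hττ.le hgcont
      rw [hg0, hg1] at this; exact this
  -- derivative
  have hderiv : ∀ τ ∈ Set.Ioo τ₀ τ₁,
      HasDerivWithinAt g (-(q / 2 * (1 / Real.cos τ ^ 2))) (Set.Ioo τ₀ τ₁) τ := by
    intro τ hτ
    have hc : Real.cos τ ≠ 0 := (hcos τ ⟨hτ.1.le, hτ.2.le⟩).ne'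
    have := ((Real.hasDerivAt_tan hc).const_mul (q / 2)).const_sub (-ε / 2)
    exact this.hasDerivWithinAt
  have hinj : Set.InjOn g (Set.Ioo τ₀ τ₁) :=
    (hanti.mono Set.Ioo_subset_Icc_self).injOn
  -- change of variables
  have hCOV := MeasureTheory.integral_image_eq_integral_abs_deriv_smul
    measurableSet_Ioo hderiv hinj
    (fun ξ => (1 - ξ) ^ (-(1:ℝ) / 2) * (2 * ξ + ε) * (ξ ^ 2 + ε * ξ + ε) ^ (-(5:ℝ) / 2))
  rw [himg] at hCOV
  -- rewrite J as a set integral over Ioo 0 1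
  rw [hJ, intervalIntegral.integral_of_le zero_le_one,
    MeasureTheory.integral_Ioc_eq_integral_Ioo, hCOV,
    intervalIntegral.integral_of_le hττ.le, MeasureTheory.integral_Ioc_eq_integral_Ioo,
    ← MeasureTheory.integral_const_mul]
  refine MeasureTheory.setIntegral_congr_fun measurableSet_Ioo ?_
  intro τ hτ
  have hc : 0 < Real.cos τ := hcos τ ⟨hτ.1.le, hτ.2.le⟩
  have hS : 0 < Real.sin (τ - τ₀) := by
    apply Real.sin_pos_of_pos_of_lt_pi
    · linarith [hτ.1]
    · linarith [hτ.2]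
  have hSq : 0 < Real.sqrt (Real.sin (τ - τ₀)) := Real.sqrt_pos.mpr hS
  have h12 : (0:ℝ) < 1 + 2 * ε := by linarith
  have hr : Real.sqrt (1 + ((2 + ε) / q) ^ 2) = 2 * Real.sqrt (1 + 2 * ε) / q := by
    have h : 1 + ((2 + ε) / q) ^ 2 = (2 * Real.sqrt (1 + 2 * ε) / q) ^ 2 := by
      rw [div_pow, div_pow, mul_pow, Real.sq_sqrt h12.le]
      field_simp
      linarith [hq2]
    rw [h, Real.sqrt_sq (by positivity)]
  have hcos0 : Real.cos τ₀ = q / (2 * Real.sqrt (1 + 2 * ε)) := by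
    rw [hτ₀, Real.cos_neg, Real.cos_arctan, hr]
    field_simp
  have hsin0 : Real.sin τ₀ = -((2 + ε) / (2 * Real.sqrt (1 + 2 * ε))) := by
    rw [hτ₀, Real.sin_neg, Real.sin_arctan, hr]
    field_simp
  have hsqe : (0:ℝ) < Real.sqrt (1 + 2 * ε) := Real.sqrt_pos.mpr h12
  have htaneq : Real.tan τ = Real.sin τ / Real.cos τ := Real.tan_eq_sin_div_cos τ
  have k1 : 1 - g τ = Real.sqrt (1 + 2 * ε) * Real.sin (τ - τ₀) / Real.cos τ := by
    rw [hgdef]; simp only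
    rw [Real.sin_sub, hcos0, hsin0, htaneq]
    field_simp
    ring_nf
  have k2 : 2 * g τ + ε = -(q * Real.sin τ / Real.cos τ) := by
    rw [hgdef]; simp only [htaneq]; field_simp; ring
  have hpy : Real.sin τ ^ 2 + Real.cos τ ^ 2 = 1 := Real.sin_sq_add_cos_sq τ
  have k3 : g τ ^ 2 + ε * g τ + ε = (q / 2) ^ 2 / Real.cos τ ^ 2 := by
    rw [hgdef]; simp only [htaneq]
    have h : Real.sin τ / Real.cos τ * Real.cos τ = Real.sin τ :=
      div_mul_cancel₀ _ hc.ne'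
    rw [eq_div_iff (pow_ne_zero 2 hc.ne')]
    linear_combination ((q^2/4) * (Real.sin τ / Real.cos τ * Real.cos τ + Real.sin τ)) * h
      + (q^2/4) * hpy + (-(Real.cos τ^2)/4) * hq2
  dsimp only
  rw [smul_eq_mul, abs_neg, abs_of_pos (by positivity), k1, k2, k3]
  -- rpow computations
  have e1 : (Real.sqrt (1 + 2 * ε) * Real.sin (τ - τ₀) / Real.cos τ) ^ (-(1:ℝ) / 2)
      = (1 + 2 * ε) ^ (-(1:ℝ) / 4) * (Real.sqrt (Real.sin (τ - τ₀)))⁻¹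
        * Real.cos τ ^ ((1:ℝ) / 2) := by
    rw [show (-(1:ℝ)/2) = -(1/2) by norm_num, Real.rpow_neg (by positivity),
      Real.div_rpow (by positivity) hc.le,
      Real.mul_rpow (Real.sqrt_nonneg _) hS.le,
      ← Real.sqrt_eq_rpow (Real.sin (τ - τ₀)),
      Real.sqrt_eq_rpow (1 + 2 * ε), ← Real.rpow_mul h12.le]
    rw [show (-(1:ℝ)/4) = -(1/4) by norm_num, Real.rpow_neg h12.le,
      show ((1:ℝ)/2 * (1/2)) = 1/4 by norm_num]
    have hc12 : (0:ℝ) < Real.cos τ ^ ((1:ℝ)/2) := Real.rpow_pos_of_pos hc _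
    have h14 : (0:ℝ) < (1 + 2 * ε) ^ ((1:ℝ)/4) := Real.rpow_pos_of_pos h12 _
    field_simp
  have e2 : ((q / 2) ^ 2 / Real.cos τ ^ 2) ^ (-(5:ℝ) / 2)
      = (2 * Real.cos τ / q) ^ 5 := by
    have hb : ((q/2)^2 / Real.cos τ ^ 2 : ℝ) = (q / (2 * Real.cos τ)) ^ 2 := by
      rw [div_pow]; ring_nf
    rw [hb, ← Real.rpow_natCast (q / (2 * Real.cos τ)) 2, ← Real.rpow_mul (by positivity),
      show ((2:ℕ):ℝ) * (-(5:ℝ)/2) = -((5:ℕ):ℝ) by norm_num,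
      Real.rpow_neg (by positivity), Real.rpow_natCast, ← inv_pow, inv_div]
  have e3 : ε ^ (-(3:ℝ) / 2) * (1 - ε / 4) ^ (-(3:ℝ) / 2) = (2 / q) ^ 3 := by
    have h4 : (0:ℝ) < 1 - ε / 4 := by linarith
    rw [← Real.mul_rpow hε0.le h4.le,
      show ε * (1 - ε / 4) = (q / 2) ^ 2 by rw [div_pow, hq2]; ring,
      ← Real.rpow_natCast (q / 2) 2, ← Real.rpow_mul (by positivity),
      show ((2:ℕ):ℝ) * (-(3:ℝ)/2) = -((3:ℕ):ℝ) by norm_num,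
      Real.rpow_neg (by positivity), Real.rpow_natCast, ← inv_pow, inv_div]
  have e4 : Real.cos τ ^ ((5:ℝ) / 2) = Real.cos τ ^ 2 * Real.cos τ ^ ((1:ℝ)/2) := by
    rw [show ((5:ℝ)/2) = 2 + 1/2 by norm_num, Real.rpow_add hc, Real.rpow_two]
  rw [e1, e2, e4,
    show (-2:ℝ) * ε ^ (-(3:ℝ)/2) * (1 - ε/4) ^ (-(3:ℝ)/2) * (1 + 2*ε) ^ (-(1:ℝ)/4)
      = -2 * (2/q)^3 * (1 + 2*ε) ^ (-(1:ℝ)/4) by rw [mul_assoc (-2:ℝ), e3]]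
  field_simp
end
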